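/- arXiv:2202.03336 — 2 statements merged into one kernel-verified Lean document; each statement's English description precedes it below -/
import Mathlib

section
/- Let q be a real-valued continuously differentiable function on [0,1] and for λ = k² let S(·,λ) be the solution of −y''(x) + q(x)y(x) = λ y(x) on [0,1] with S(0,λ) = 0, S'(0,λ) = 1. Then, with Q(x) = (1/2)∫₀ˣ q(t)dt and τ = |Im k|, one has S(x,λ) = sin(kx)/k − (cos(kx)/k²)·Q(x) + O(k⁻³ exp(τx)) as |λ| → ∞, uniformly for x ∈ [0,1]. -/
/-!
Variation of constants turns the initial value problem into the Volterra equation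
`S(x) = sin kx / k + k⁻¹ ∫₀ˣ sin k(x-t) q(t) S(t) dt`. Since `|sin k(x-t)| ≤ e^{τ(x-t)}`, the
kernel preserves bounds of the form `A e^{τt}`; comparing `S` with the best such constant gives
`|S| ≤ 2 e^{τx}/|k|` once `|k| ≥ 2 max |q|`, and feeding this back gives
`S = sin kx / k + O(e^{τx}/|k|²)`. Substituting this once more, the product-to-sum formula
`sin k(x-t) sin kt = (cos k(x-2t) - cos kx)/2` splits off the term `-cos kx · Q(x)/k²`, and what
is left is `O(e^{τx}/|k|³)` plus `(2k²)⁻¹ ∫₀ˣ q(t) cos k(x-2t) dt`, which is `O(e^{τx}/|k|)`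
after one integration by parts because `q` is `C¹`.
-/

open Set Filter Asymptotics

/-- `y`, with derivative `y'`, solves `-y'' + q y = lam y` on `[0,1]`. -/
def IsSLSolution (q : ℝ → ℝ) (lam : ℂ) (y y' : ℝ → ℂ) : Prop :=
  (∀ x ∈ Set.Icc (0:ℝ) 1, HasDerivWithinAt y (y' x) (Set.Icc 0 1) x) ∧
  (∀ x ∈ Set.Icc (0:ℝ) 1, HasDerivWithinAt y' (((q x : ℂ) - lam) * y x) (Set.Icc 0 1) x)

open Complex intervalIntegral
open MeasureTheory (volume)

lemma norm_sin_le_exp_abs_im (z : ℂ) : ‖sin z‖ ≤ Real.exp |z.im| := by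
  have hexp (w : ℂ) (hw : |w.re| ≤ |z.im|) : ‖Complex.exp w‖ ≤ Real.exp |z.im| := by
    rw [norm_exp]
    exact Real.exp_le_exp.2 ((le_abs_self _).trans hw)
  calc ‖sin z‖ = ‖Complex.exp (-z * I) - Complex.exp (z * I)‖ / 2 := by
        simp [sin]
    _ ≤ (‖Complex.exp (-z * I)‖ + ‖Complex.exp (z * I)‖) / 2 := by gcongr; exact norm_sub_le _ _
    _ ≤ (Real.exp |z.im| + Real.exp |z.im|) / 2 := by
        gcongr <;> apply hexp <;> simp
    _ = Real.exp |z.im| := by ring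

lemma norm_sin_mul_ofReal_le (k : ℂ) {r y : ℝ} (h : |r| ≤ y) :
    ‖sin (k * r)‖ ≤ Real.exp (|k.im| * y) := by
  refine (norm_sin_le_exp_abs_im _).trans (Real.exp_le_exp.2 ?_)
  rw [mul_im, ofReal_re, ofReal_im, mul_zero, zero_add, abs_mul]
  exact mul_le_mul_of_nonneg_left h (abs_nonneg _)

lemma hasDerivAt_sin_mul_ofReal (k : ℂ) {φ : ℝ → ℝ} {φ' t : ℝ} (hφ : HasDerivAt φ φ' t) :
    HasDerivAt (fun u => sin (k * φ u)) (k * φ' * cos (k * φ t)) t := by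
  have := (Complex.hasDerivAt_sin _).comp t (hφ.ofReal_comp.const_mul k)
  simpa [Function.comp_def, mul_comm] using this

lemma hasDerivAt_cos_mul_ofReal (k : ℂ) {φ : ℝ → ℝ} {φ' t : ℝ} (hφ : HasDerivAt φ φ' t) :
    HasDerivAt (fun u => cos (k * φ u)) (-(k * φ' * sin (k * φ t))) t := by
  have := (Complex.hasDerivAt_cos _).comp t (hφ.ofReal_comp.const_mul k)
  simpa [Function.comp_def, mul_comm] using this

lemma norm_integral_sin_mul_le (k : ℂ) {x B : ℝ} (hx : 0 ≤ x) {g : ℝ → ℂ}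
    (hg : ∀ t ∈ Ioc 0 x, ‖g t‖ ≤ B * Real.exp (|k.im| * t)) :
    ‖∫ t in 0..x, sin (k * ↑(x - t)) * g t‖ ≤ B * x * Real.exp (|k.im| * x) := by
  have h := norm_integral_le_of_norm_le_const (a := 0) (b := x)
    (C := B * Real.exp (|k.im| * x)) (f := fun t => sin (k * ↑(x - t)) * g t) fun t ht => by
      rw [uIoc_of_le hx] at ht
      calc ‖sin (k * ↑(x - t)) * g t‖
          ≤ Real.exp (|k.im| * (x - t)) * (B * Real.exp (|k.im| * t)) := by
            rw [norm_mul]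
            refine mul_le_mul (norm_sin_mul_ofReal_le k (abs_of_nonneg ?_).le) (hg t ht)
              (norm_nonneg _) (Real.exp_pos _).le
            linarith [ht.2]
        _ = B * Real.exp (|k.im| * x) := by
            rw [mul_left_comm, ← Real.exp_add]; ring_nf
  rwa [sub_zero, abs_of_nonneg hx, mul_right_comm] at h

lemma IsSLSolution.eq_sin_add_integral {q : ℝ → ℝ} (hq : ContinuousOn q (Icc 0 1)) {k : ℂ}
    (hk : k ≠ 0) {y y' : ℝ → ℂ} (hy : IsSLSolution q (k ^ 2) y y') (hy0 : y 0 = 0)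
    (hy'0 : y' 0 = 1) {x : ℝ} (hx : x ∈ Icc (0:ℝ) 1) :
    y x = sin (k * x) / k + (∫ t in 0..x, sin (k * ↑(x - t)) * (q t * y t)) / k := by
  have hsub : Icc 0 x ⊆ Icc (0:ℝ) 1 := Icc_subset_Icc_right hx.2
  have hqc : ContinuousOn q (Icc 0 x) := hq.mono hsub
  have hyc : ContinuousOn y (Icc 0 x) := fun t ht =>
    (hy.1 t (hsub ht)).continuousWithinAt.mono hsub
  have hy'c : ContinuousOn y' (Icc 0 x) := fun t ht =>
    (hy.2 t (hsub ht)).continuousWithinAt.mono hsub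
  -- pairing of `(y, y')` with the free solution `t ↦ sin (k (x - t)) / k`, which vanishes at `t = x`
  set W : ℝ → ℂ := fun t => y' t * (sin (k * ↑(x - t)) / k) + y t * cos (k * ↑(x - t))
  have hW : ∀ t ∈ Ioo 0 x, HasDerivAt W (sin (k * ↑(x - t)) * (q t * y t) / k) t := by
    intro t ht
    have ht1 : t ∈ Ioo (0:ℝ) 1 := ⟨ht.1, ht.2.trans_le hx.2⟩
    have hd : HasDerivAt (fun u : ℝ => x - u) (-1) t := (hasDerivAt_id t).const_sub x
    have := (((hy.2 t (Ioo_subset_Icc_self ht1)).hasDerivAt (Icc_mem_nhds ht1.1 ht1.2)).mul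
      ((hasDerivAt_sin_mul_ofReal k hd).div_const k)).add
      (((hy.1 t (Ioo_subset_Icc_self ht1)).hasDerivAt (Icc_mem_nhds ht1.1 ht1.2)).mul
      (hasDerivAt_cos_mul_ofReal k hd))
    refine this.congr_deriv ?_
    push_cast
    field_simp
    ring
  have hFTC := integral_eq_sub_of_hasDerivAt_of_le (f := W) hx.1 (by fun_prop) hW
    (ContinuousOn.intervalIntegrable_of_Icc hx.1 (by fun_prop))
  rw [intervalIntegral.integral_div] at hFTC
  simp only [W, sub_self, sub_zero, ofReal_zero, mul_zero, sin_zero, cos_zero, hy0, hy'0] at hFTC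
  rw [hFTC]
  ring

section VolterraEquation

variable {k : ℂ} {p p' y : ℝ → ℂ} {C C' : ℝ}

lemma norm_le_of_eq_sin_add_integral (hk : k ≠ 0) (hkC : 2 * C ≤ ‖k‖)
    (hp : ∀ t ∈ Icc (0:ℝ) 1, ‖p t‖ ≤ C) (hy : ContinuousOn y (Icc 0 1))
    (heq : ∀ x ∈ Icc (0:ℝ) 1,
      y x = sin (k * x) / k + (∫ t in 0..x, sin (k * ↑(x - t)) * (p t * y t)) / k)
    {x : ℝ} (hx : x ∈ Icc (0:ℝ) 1) :
    ‖y x‖ ≤ 2 / ‖k‖ * Real.exp (|k.im| * x) := by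
  have hC : 0 ≤ C := (norm_nonneg _).trans (hp 0 ⟨le_rfl, zero_le_one⟩)
  have hk' : 0 < ‖k‖ := norm_pos_iff.2 hk
  have hw : ContinuousOn (fun t => ‖y t‖ * Real.exp (-(|k.im| * t))) (Icc 0 1) :=
    hy.norm.mul (by fun_prop)
  obtain ⟨t₀, ht₀, hmax⟩ := isCompact_Icc.exists_isMaxOn (nonempty_Icc.2 zero_le_one) hw
  set m := ‖y t₀‖ * Real.exp (-(|k.im| * t₀))
  have hm0 : 0 ≤ m := mul_nonneg (norm_nonneg _) (Real.exp_pos _).le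
  have hm : ∀ t ∈ Icc (0:ℝ) 1, ‖y t‖ ≤ m * Real.exp (|k.im| * t) := by
    intro t ht
    have := mul_le_mul_of_nonneg_right (hmax ht : ‖y t‖ * _ ≤ m) (Real.exp_pos (|k.im| * t)).le
    rwa [mul_assoc, ← Real.exp_add, neg_add_cancel, Real.exp_zero, mul_one] at this
  have hself : ‖y t₀‖ ≤ (1 + C * m) / ‖k‖ * Real.exp (|k.im| * t₀) := by
    have hI := norm_integral_sin_mul_le k (B := C * m) ht₀.1 (g := fun s => p s * y s)
      fun s hs => by
        have hs1 : s ∈ Icc (0:ℝ) 1 := ⟨hs.1.le, hs.2.trans ht₀.2⟩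
        rw [norm_mul, mul_assoc]
        exact mul_le_mul (hp s hs1) (hm s hs1) (norm_nonneg _) hC
    rw [heq t₀ ht₀]
    calc ‖sin (k * t₀) / k + (∫ s in 0..t₀, sin (k * ↑(t₀ - s)) * (p s * y s)) / k‖
        ≤ Real.exp (|k.im| * t₀) / ‖k‖ + C * m * t₀ * Real.exp (|k.im| * t₀) / ‖k‖ := by
          refine (norm_add_le _ _).trans ?_
          rw [norm_div, norm_div]
          gcongr
          exact norm_sin_mul_ofReal_le k (abs_of_nonneg ht₀.1).le
      _ ≤ (1 + C * m) / ‖k‖ * Real.exp (|k.im| * t₀) := by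
          rw [div_mul_eq_mul_div, ← add_div]
          gcongr
          nlinarith [mul_le_of_le_one_right (mul_nonneg hC hm0) ht₀.2,
            Real.exp_pos (|k.im| * t₀)]
  have hmk : m * ‖k‖ ≤ 1 + C * m := by
    have := mul_le_mul_of_nonneg_right hself (Real.exp_pos (-(|k.im| * t₀))).le
    rw [mul_assoc, ← Real.exp_add, add_neg_cancel, Real.exp_zero, mul_one,
      le_div_iff₀ hk'] at this
    exact this
  calc ‖y x‖ ≤ m * Real.exp (|k.im| * x) := hm x hx
    _ ≤ 2 / ‖k‖ * Real.exp (|k.im| * x) := by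
        gcongr
        rw [le_div_iff₀ hk']
        nlinarith

lemma norm_sub_sin_le_of_eq_sin_add_integral (hk : k ≠ 0) (hkC : 2 * C ≤ ‖k‖)
    (hp : ∀ t ∈ Icc (0:ℝ) 1, ‖p t‖ ≤ C) (hy : ContinuousOn y (Icc 0 1))
    (heq : ∀ x ∈ Icc (0:ℝ) 1,
      y x = sin (k * x) / k + (∫ t in 0..x, sin (k * ↑(x - t)) * (p t * y t)) / k)
    {x : ℝ} (hx : x ∈ Icc (0:ℝ) 1) :
    ‖y x - sin (k * x) / k‖ ≤ 2 * C / ‖k‖ ^ 2 * Real.exp (|k.im| * x) := by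
  have hC : 0 ≤ C := (norm_nonneg _).trans (hp 0 ⟨le_rfl, zero_le_one⟩)
  have hI := norm_integral_sin_mul_le k (B := C * (2 / ‖k‖)) hx.1 (g := fun t => p t * y t)
    fun t ht => by
      have ht1 : t ∈ Icc (0:ℝ) 1 := ⟨ht.1.le, ht.2.trans hx.2⟩
      rw [norm_mul, mul_assoc]
      exact mul_le_mul (hp t ht1) (norm_le_of_eq_sin_add_integral hk hkC hp hy heq ht1)
        (norm_nonneg _) hC
  rw [heq x hx, add_sub_cancel_left, norm_div]
  calc _ ≤ C * (2 / ‖k‖) * x * Real.exp (|k.im| * x) / ‖k‖ := by gcongr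
    _ = 2 * C / ‖k‖ ^ 2 * Real.exp (|k.im| * x) * x := by ring
    _ ≤ 2 * C / ‖k‖ ^ 2 * Real.exp (|k.im| * x) := mul_le_of_le_one_right (by positivity) hx.2

lemma norm_integral_mul_cos_le (hk : k ≠ 0) {x : ℝ} (hx : 0 ≤ x)
    (hp : ∀ t ∈ Icc 0 x, HasDerivWithinAt p (p' t) (Icc 0 x) t)
    (hp' : IntervalIntegrable p' volume 0 x)
    (hpC : ∀ t ∈ Icc 0 x, ‖p t‖ ≤ C) (hp'C : ∀ t ∈ Icc 0 x, ‖p' t‖ ≤ C') :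
    ‖∫ t in 0..x, p t * cos (k * ↑(x - 2 * t))‖ ≤
      (2 * C + C' * x) / (2 * ‖k‖) * Real.exp (|k.im| * x) := by
  have hC : 0 ≤ C := (norm_nonneg _).trans (hpC 0 ⟨le_rfl, hx⟩)
  set E := Real.exp (|k.im| * x) / (2 * ‖k‖)
  set v : ℝ → ℂ := fun t => -sin (k * ↑(x - 2 * t)) / (2 * k)
  have hv : ∀ t, HasDerivAt v (cos (k * ↑(x - 2 * t))) t := by
    intro t
    refine ((hasDerivAt_sin_mul_ofReal k (((hasDerivAt_id' t).const_mul 2).const_sub x)).neg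
      |>.div_const (2 * k)).congr_deriv ?_
    push_cast
    field_simp
  have hvE : ∀ t ∈ Icc 0 x, ‖v t‖ ≤ E := by
    intro t ht
    simp only [v, norm_div, norm_neg, norm_mul, Complex.norm_ofNat]
    exact div_le_div_of_nonneg_right
      (norm_sin_mul_ofReal_le k (abs_le.2 ⟨by linarith [ht.2], by linarith [ht.1]⟩))
      (by positivity)
  have hparts := integral_mul_deriv_eq_deriv_mul_of_hasDerivWithinAt (u := p) (v := v)
    (by rwa [uIcc_of_le hx]) (fun t _ => (hv t).hasDerivWithinAt) hp'
    ((by fun_prop : Continuous fun t : ℝ => cos (k * ↑(x - 2 * t))).intervalIntegrable 0 x)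
  have hrem : ‖∫ t in 0..x, p' t * v t‖ ≤ C' * E * x := by
    have := norm_integral_le_of_norm_le_const (a := 0) (b := x) (C := C' * E)
      (f := fun t => p' t * v t) fun t ht => by
        rw [uIoc_of_le hx] at ht
        have ht' : t ∈ Icc 0 x := ⟨ht.1.le, ht.2⟩
        rw [norm_mul]
        exact mul_le_mul (hp'C t ht') (hvE t ht') (norm_nonneg _)
          ((norm_nonneg _).trans (hp'C t ht'))
    rwa [sub_zero, abs_of_nonneg hx] at this
  rw [hparts]
  calc _ ≤ ‖p x‖ * ‖v x‖ + ‖p 0‖ * ‖v 0‖ + ‖∫ t in 0..x, p' t * v t‖ := by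
        refine (norm_sub_le _ _).trans ?_
        rw [← norm_mul, ← norm_mul]
        gcongr
        exact norm_sub_le _ _
    _ ≤ C * E + C * E + C' * E * x := by
        gcongr
        · exact hpC x ⟨hx, le_rfl⟩
        · exact hvE x ⟨hx, le_rfl⟩
        · exact hpC 0 ⟨le_rfl, hx⟩
        · exact hvE 0 ⟨le_rfl, hx⟩
    _ = (2 * C + C' * x) / (2 * ‖k‖) * Real.exp (|k.im| * x) := by ring

lemma sin_mul_sub_mul_sin_mul (k : ℂ) (x t : ℝ) :
    sin (k * ↑(x - t)) * sin (k * t) = (cos (k * ↑(x - 2 * t)) - cos (k * x)) / 2 := by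
  have h₁ := cos_sub (k * ↑(x - t)) (k * t)
  have h₂ := cos_add (k * ↑(x - t)) (k * t)
  push_cast at h₁ h₂ ⊢
  rw [show k * (x - t) - k * t = k * (x - 2 * t) by ring] at h₁
  rw [show k * (x - t) + k * t = k * x by ring] at h₂
  linear_combination (h₂ - h₁) / 2

lemma sub_sin_add_cos_mul_integral_eq (hk : k ≠ 0) {x : ℝ} (hx : 0 ≤ x)
    (hp : ContinuousOn p (Icc 0 x)) (hy : ContinuousOn y (Icc 0 x))
    (heq : y x = sin (k * x) / k + (∫ t in 0..x, sin (k * ↑(x - t)) * (p t * y t)) / k) :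
    y x - (sin (k * x) / k - cos (k * x) / k ^ 2 * ((1 / 2) * ∫ t in 0..x, p t)) =
      (∫ t in 0..x, sin (k * ↑(x - t)) * (p t * (y t - sin (k * t) / k))) / k +
        (∫ t in 0..x, p t * cos (k * ↑(x - 2 * t))) / (2 * k ^ 2) := by
  have hsplit : ∫ t in 0..x, sin (k * ↑(x - t)) * (p t * y t) =
      (∫ t in 0..x, sin (k * ↑(x - t)) * (p t * (y t - sin (k * t) / k))) +
        ((∫ t in 0..x, p t * cos (k * ↑(x - 2 * t))) - cos (k * x) * ∫ t in 0..x, p t) /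
          (2 * k) := by
    rw [← integral_const_mul, ← integral_sub, ← intervalIntegral.integral_div, ← integral_add]
    · refine integral_congr fun t _ => ?_
      have := sin_mul_sub_mul_sin_mul k x t
      linear_combination (p t / k) * this
    all_goals exact ContinuousOn.intervalIntegrable_of_Icc hx (by fun_prop)
  rw [heq, hsplit]
  field_simp
  ring

lemma norm_sub_sin_add_cos_mul_integral_le (hk : k ≠ 0) (hkC : 2 * C ≤ ‖k‖)
    (hp : ∀ t ∈ Icc (0:ℝ) 1, HasDerivWithinAt p (p' t) (Icc 0 1) t)
    (hp' : IntervalIntegrable p' volume 0 1)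
    (hpC : ∀ t ∈ Icc (0:ℝ) 1, ‖p t‖ ≤ C) (hp'C : ∀ t ∈ Icc (0:ℝ) 1, ‖p' t‖ ≤ C')
    (hy : ContinuousOn y (Icc 0 1))
    (heq : ∀ x ∈ Icc (0:ℝ) 1,
      y x = sin (k * x) / k + (∫ t in 0..x, sin (k * ↑(x - t)) * (p t * y t)) / k)
    {x : ℝ} (hx : x ∈ Icc (0:ℝ) 1) :
    ‖y x - (sin (k * x) / k - cos (k * x) / k ^ 2 * ((1 / 2) * ∫ t in 0..x, p t))‖ ≤
      (2 * C ^ 2 + (2 * C + C') / 4) / ‖k‖ ^ 3 * Real.exp (|k.im| * x) := by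
  have hC : 0 ≤ C := (norm_nonneg _).trans (hpC 0 ⟨le_rfl, zero_le_one⟩)
  have hC' : 0 ≤ C' := (norm_nonneg _).trans (hp'C 0 ⟨le_rfl, zero_le_one⟩)
  have hsub : Icc 0 x ⊆ Icc (0:ℝ) 1 := Icc_subset_Icc_right hx.2
  have hpc : ContinuousOn p (Icc 0 1) := fun t ht => (hp t ht).continuousWithinAt
  have hI := norm_integral_sin_mul_le k (B := C * (2 * C / ‖k‖ ^ 2)) hx.1
    (g := fun t => p t * (y t - sin (k * t) / k)) fun t ht => by
      have ht1 : t ∈ Icc (0:ℝ) 1 := ⟨ht.1.le, ht.2.trans hx.2⟩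
      rw [norm_mul, mul_assoc]
      exact mul_le_mul (hpC t ht1)
        (norm_sub_sin_le_of_eq_sin_add_integral hk hkC hpC hy heq ht1) (norm_nonneg _) hC
  have hJ := norm_integral_mul_cos_le hk hx.1 (fun t ht => (hp t (hsub ht)).mono hsub)
    (hp'.mono_set (by rw [uIcc_of_le hx.1, uIcc_of_le zero_le_one]; exact hsub))
    (fun t ht => hpC t (hsub ht)) (fun t ht => hp'C t (hsub ht))
  rw [sub_sin_add_cos_mul_integral_eq hk hx.1 (hpc.mono hsub) (hy.mono hsub) (heq x hx)]
  calc _ ≤ C * (2 * C / ‖k‖ ^ 2) * x * Real.exp (|k.im| * x) / ‖k‖ +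
        (2 * C + C' * x) / (2 * ‖k‖) * Real.exp (|k.im| * x) / (2 * ‖k‖ ^ 2) := by
        refine (norm_add_le _ _).trans ?_
        rw [norm_div, norm_div, norm_mul, norm_pow, Complex.norm_ofNat]
        gcongr
    _ = (2 * C ^ 2 * x + (2 * C + C' * x) / 4) / ‖k‖ ^ 3 * Real.exp (|k.im| * x) := by
        field_simp
        ring
    _ ≤ (2 * C ^ 2 + (2 * C + C') / 4) / ‖k‖ ^ 3 * Real.exp (|k.im| * x) := by
        gcongr ?_ / _ * _
        have h1x : 0 ≤ 1 - x := sub_nonneg.2 hx.2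
        nlinarith [mul_nonneg (sq_nonneg C) h1x, mul_nonneg hC' h1x]

end VolterraEquation

/-- Asymptotics of the solution `S(·, λ)` with `S(0,λ)=0`, `S'(0,λ)=1`, where `λ = k²`:
`S(x,λ) = sin kx / k - (cos kx / k²) Q(x) + O(k⁻³ e^{|Im k| x})`
as `|λ| → ∞`, uniformly for `x ∈ [0,1]`. -/
theorem stmt_1
    (q : ℝ → ℝ) (hq : ContDiffOn ℝ 1 q (Set.Icc 0 1))
    (S S' : ℂ → ℝ → ℂ)
    (hsol : ∀ k : ℂ, IsSLSolution q (k ^ 2) (S k) (S' k))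
    (hS0 : ∀ k : ℂ, S k 0 = 0) (hS'0 : ∀ k : ℂ, S' k 0 = 1) :
    ∃ M R : ℝ, 0 < M ∧ 0 < R ∧ ∀ k : ℂ, R ≤ ‖k‖ → ∀ x ∈ Set.Icc (0:ℝ) 1,
      ‖S k x - (Complex.sin (k * (x:ℂ)) / k -
          (Complex.cos (k * (x:ℂ)) / k ^ 2) * (((1/2) * ∫ t in (0:ℝ)..x, q t : ℝ) : ℂ))‖ ≤
        M * ‖k‖⁻¹ ^ 3 * Real.exp (|k.im| * x) := by
  have hq' : ContinuousOn (fun t => ((derivWithin q (Icc 0 1) t : ℝ) : ℂ)) (Icc 0 1) :=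
    continuous_ofReal.comp_continuousOn
      (hq.continuousOn_derivWithin (uniqueDiffOn_Icc one_pos) le_rfl)
  obtain ⟨C, hC⟩ := isCompact_Icc.exists_bound_of_continuousOn
    (continuous_ofReal.comp_continuousOn hq.continuousOn)
  obtain ⟨C', hC'⟩ := isCompact_Icc.exists_bound_of_continuousOn hq'
  have hC0 : 0 ≤ C := (norm_nonneg _).trans (hC 0 ⟨le_rfl, zero_le_one⟩)
  have hC'0 : 0 ≤ C' := (norm_nonneg _).trans (hC' 0 ⟨le_rfl, zero_le_one⟩)
  refine ⟨2 * C ^ 2 + (2 * C + C') / 4 + 1, 2 * C + 1, by positivity, by positivity,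
    fun k hk x hx => ?_⟩
  have hk0 : k ≠ 0 := norm_pos_iff.1 (by linarith)
  have hQ : (((1 / 2) * ∫ t in (0:ℝ)..x, q t : ℝ) : ℂ) = (1 / 2) * ∫ t in (0:ℝ)..x, (q t : ℂ) := by
    rw [integral_ofReal]; push_cast; rfl
  rw [hQ]
  calc _ ≤ (2 * C ^ 2 + (2 * C + C') / 4) / ‖k‖ ^ 3 * Real.exp (|k.im| * x) :=
        norm_sub_sin_add_cos_mul_integral_le hk0 (by linarith)
          (fun t ht => ((hq.differentiableOn one_ne_zero t ht).hasDerivWithinAt).ofReal_comp)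
          (hq'.intervalIntegrable_of_Icc zero_le_one) hC hC'
          (fun t ht => ((hsol k).1 t ht).continuousWithinAt)
          (fun _ ht => (hsol k).eq_sin_add_integral hq.continuousOn hk0 (hS0 k) (hS'0 k) ht) hx
    _ ≤ _ := by
        rw [inv_pow, ← div_eq_mul_inv]
        gcongr ?_ / _ * _
        linarith
end

section
/- For the problem L with h, H ∈ ℝ, the characteristic function satisfies Δ(λ) = k·sin k + w·cos k + γ₁·cos(kξ₁) − γ₀·cos(k(1−ξ₀)) + O(exp(τ)) as |k| → ∞, where w = h − H − Q(1) and τ = |Im k|. -/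
open Set Filter Asymptotics

/-- The boundary form `U(y) = y'(0) + h y(0) - γ₀ y(ξ₀)`. -/
def Uform (h γ0 ξ0 : ℝ) (y y' : ℝ → ℂ) : ℂ := y' 0 + (h:ℂ) * y 0 - (γ0:ℂ) * y ξ0

/-- The boundary form `V(y) = y'(1) + H y(1) - γ₁ y(ξ₁)`. -/
def Vform (H γ1 ξ1 : ℝ) (y y' : ℝ → ℂ) : ℂ := y' 1 + (H:ℂ) * y 1 - (γ1:ℂ) * y ξ1

/-!
Write `θ = C(ξ₀) S - S(ξ₀) C`, so that `θ(ξ₀) = 0` and, the Wronskian being constant,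
`θ'(ξ₀) = 1`; the boundary forms give `Δ = h V(S) - V(C) - γ₀ V(θ)`. For a solution `y` and
`φ(t) = sin k(x - t)` or `cos k(x - t)`, the Lagrange identity `(φ y' - φ' y)' = q φ y` yields the
variation-of-constants formulas for `y(x)` and `y'(x)` in terms of the data at `x₀`. Maximising
`‖y t‖ e^{-τ|t - x₀|}` over `[0,1]` absorbs the integral term once `‖k‖ ≥ 2 max |q|`, so
`‖k‖ ‖y x‖ ≤ 2 (‖k‖ ‖y x₀‖ + ‖y' x₀‖) e^{τ|x - x₀|}`, and then
`y'(x) = y'(x₀) cos k(x - x₀) - k y(x₀) sin k(x - x₀) + O(e^τ)`. Hence `V(S) = cos k + O(e^τ)`,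
`V(θ) = cos k(1 - ξ₀) + O(e^τ)` and `V(C) = -k sin k + O(e^τ)`; since `‖cos z‖ ≤ e^{|Im z|}`,
what is left of the expansion is `O(e^τ)` as well.
-/

open intervalIntegral

namespace Complex

theorem norm_cos_le_exp_abs_im (z : ℂ) : ‖cos z‖ ≤ Real.exp |z.im| := by
  have h₁ : ‖exp (z * I)‖ ≤ Real.exp |z.im| := by simpa [norm_exp] using neg_le_abs z.im
  have h₂ : ‖exp (-z * I)‖ ≤ Real.exp |z.im| := by simpa [norm_exp] using le_abs_self z.im
  rw [cos, norm_div, Complex.norm_ofNat]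
  linarith [norm_add_le (exp (z * I)) (exp (-z * I))]

theorem norm_sin_le_exp_abs_im (z : ℂ) : ‖sin z‖ ≤ Real.exp |z.im| := by
  have h₁ : ‖exp (z * I)‖ ≤ Real.exp |z.im| := by simpa [norm_exp] using neg_le_abs z.im
  have h₂ : ‖exp (-z * I)‖ ≤ Real.exp |z.im| := by simpa [norm_exp] using le_abs_self z.im
  rw [sin, norm_div, norm_mul, norm_I, mul_one, Complex.norm_ofNat]
  linarith [norm_sub_le (exp (-z * I)) (exp (z * I))]

end Complex

theorem norm_apply_mul_ofReal_le {f : ℂ → ℂ} (hf : ∀ z, ‖f z‖ ≤ Real.exp |z.im|) (k : ℂ)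
    (r : ℝ) : ‖f (k * r)‖ ≤ Real.exp (|k.im| * |r|) := by
  simpa [abs_mul] using hf (k * r)

theorem norm_cos_mul_ofReal_le {r : ℝ} (hr : r ∈ Icc (0:ℝ) 1) (k : ℂ) :
    ‖Complex.cos (k * r)‖ ≤ Real.exp |k.im| :=
  (norm_apply_mul_ofReal_le Complex.norm_cos_le_exp_abs_im k r).trans <| Real.exp_le_exp.2 <|
    mul_le_of_le_one_right (abs_nonneg _) (abs_le.2 ⟨by linarith [hr.1], hr.2⟩)

theorem norm_ofReal_mul_le {r b : ℝ} {z : ℂ} (hz : ‖z‖ ≤ b) : ‖(r : ℂ) * z‖ ≤ |r| * b := by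
  rw [norm_mul, Complex.norm_real, Real.norm_eq_abs]
  exact mul_le_mul_of_nonneg_left hz (abs_nonneg r)

theorem abs_sub_add_abs_sub_of_mem_uIcc {a b t : ℝ} (ht : t ∈ uIcc a b) :
    |b - t| + |t - a| = |b - a| := by
  have := dist_add_dist_of_mem_segment (segment_eq_uIcc a b ▸ ht)
  simp only [Real.dist_eq] at this
  rw [abs_sub_comm b t, abs_sub_comm t a, abs_sub_comm b a]
  linarith

theorem integral_eq_sub_of_hasDerivWithinAt_Icc {E : Type*} [NormedAddCommGroup E]
    [NormedSpace ℝ E] [CompleteSpace E] {f f' : ℝ → E} {a b c d : ℝ}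
    (hf : ∀ x ∈ Icc a b, HasDerivWithinAt f (f' x) (Icc a b) x)
    (hf' : ContinuousOn f' (Icc a b)) (hc : c ∈ Icc a b) (hd : d ∈ Icc a b) :
    ∫ t in c..d, f' t = f d - f c := by
  have hsub : uIcc c d ⊆ Icc a b := uIcc_subset_Icc hc hd
  have hcont : ContinuousOn f (Icc a b) := fun x hx => (hf x hx).continuousWithinAt
  refine integral_eq_sub_of_hasDeriv_right (hcont.mono hsub) (fun x hx => ?_)
    (hf'.mono hsub).intervalIntegrable
  have hx' : x ∈ Ioo a b := Ioo_subset_Ioo (le_min hc.1 hd.1) (max_le hc.2 hd.2) hx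
  exact ((hf x (Ioo_subset_Icc_self hx')).hasDerivAt (Icc_mem_nhds hx'.1 hx'.2)).hasDerivWithinAt

theorem hasDerivAt_mul_ofReal_sub (k : ℂ) (x t : ℝ) :
    HasDerivAt (fun s : ℝ => k * ((x - s : ℝ) : ℂ)) (-k) t :=
  ((((hasDerivAt_id t).const_sub x).ofReal_comp).const_mul k).congr_deriv (by simp)

namespace IsSLSolution

variable {p q : ℝ → ℝ} {lam : ℂ} {u u' y y' : ℝ → ℂ}

theorem continuousOn (hy : IsSLSolution q lam y y') : ContinuousOn y (Icc 0 1) :=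
  fun x hx => (hy.1 x hx).continuousWithinAt

theorem const_mul_sub_const_mul (hu : IsSLSolution q lam u u') (hy : IsSLSolution q lam y y')
    (a b : ℂ) :
    IsSLSolution q lam (fun x => a * u x - b * y x) (fun x => a * u' x - b * y' x) := by
  refine ⟨fun x hx => ((hu.1 x hx).const_mul a).sub ((hy.1 x hx).const_mul b), fun x hx => ?_⟩
  refine (((hu.2 x hx).const_mul a).sub ((hy.2 x hx).const_mul b)).congr_deriv ?_
  ring

theorem hasDerivWithinAt_wronskian (hu : IsSLSolution p lam u u') (hy : IsSLSolution q lam y y')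
    {x : ℝ} (hx : x ∈ Icc (0:ℝ) 1) :
    HasDerivWithinAt (fun t => u t * y' t - u' t * y t) (((q x : ℂ) - p x) * u x * y x)
      (Icc 0 1) x := by
  refine (((hu.1 x hx).mul (hy.2 x hx)).sub ((hu.2 x hx).mul (hy.1 x hx))).congr_deriv ?_
  ring

theorem wronskian_sub_eq_integral (hp : ContinuousOn p (Icc 0 1)) (hq : ContinuousOn q (Icc 0 1))
    (hu : IsSLSolution p lam u u') (hy : IsSLSolution q lam y y') {a b : ℝ}
    (ha : a ∈ Icc (0:ℝ) 1) (hb : b ∈ Icc (0:ℝ) 1) :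
    (u b * y' b - u' b * y b) - (u a * y' a - u' a * y a) =
      ∫ t in a..b, ((q t : ℂ) - p t) * u t * y t := by
  refine (integral_eq_sub_of_hasDerivWithinAt_Icc
    (fun x hx => hasDerivWithinAt_wronskian hu hy hx) ?_ ha hb).symm
  exact (((Complex.continuous_ofReal.comp_continuousOn hq).sub
    (Complex.continuous_ofReal.comp_continuousOn hp)).mul hu.continuousOn).mul hy.continuousOn

theorem wronskian_eq (hq : ContinuousOn q (Icc 0 1)) (hu : IsSLSolution q lam u u')
    (hy : IsSLSolution q lam y y') {a b : ℝ} (ha : a ∈ Icc (0:ℝ) 1) (hb : b ∈ Icc (0:ℝ) 1) :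
    u b * y' b - u' b * y b = u a * y' a - u' a * y a := by
  simpa [sub_eq_zero] using wronskian_sub_eq_integral hq hq hu hy ha hb

theorem wronskian_eq_one (hq : ContinuousOn q (Icc 0 1)) (hu : IsSLSolution q lam u u')
    (hy : IsSLSolution q lam y y') (hu0 : u 0 = 1) (hu'0 : u' 0 = 0) (hy0 : y 0 = 0)
    (hy'0 : y' 0 = 1) {x : ℝ} (hx : x ∈ Icc (0:ℝ) 1) : u x * y' x - y x * u' x = 1 := by
  have h := hu.wronskian_eq hq hy ⟨le_rfl, zero_le_one⟩ hx
  rw [hu0, hu'0, hy0, hy'0] at h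
  linear_combination h

end IsSLSolution

theorem isSLSolution_sin_mul_sub (k : ℂ) (x : ℝ) :
    IsSLSolution (fun _ => 0) (k ^ 2) (fun t => Complex.sin (k * ((x - t : ℝ) : ℂ)))
      (fun t => -(k * Complex.cos (k * ((x - t : ℝ) : ℂ)))) := by
  refine ⟨fun t _ => ?_, fun t _ => ?_⟩
  · refine ((Complex.hasDerivAt_sin _).comp t (hasDerivAt_mul_ofReal_sub k x t)
      ).hasDerivWithinAt.congr_deriv ?_
    ring
  · refine (((Complex.hasDerivAt_cos _).comp t (hasDerivAt_mul_ofReal_sub k x t)).const_mul k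
      ).neg.hasDerivWithinAt.congr_deriv ?_
    simp only [Complex.ofReal_zero]
    ring

theorem isSLSolution_cos_mul_sub (k : ℂ) (x : ℝ) :
    IsSLSolution (fun _ => 0) (k ^ 2) (fun t => Complex.cos (k * ((x - t : ℝ) : ℂ)))
      (fun t => k * Complex.sin (k * ((x - t : ℝ) : ℂ))) := by
  refine ⟨fun t _ => ?_, fun t _ => ?_⟩
  · refine ((Complex.hasDerivAt_cos _).comp t (hasDerivAt_mul_ofReal_sub k x t)
      ).hasDerivWithinAt.congr_deriv ?_
    ring
  · refine (((Complex.hasDerivAt_sin _).comp t (hasDerivAt_mul_ofReal_sub k x t)).const_mul k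
      ).hasDerivWithinAt.congr_deriv ?_
    simp only [Complex.ofReal_zero]
    ring

theorem norm_integral_mul_kernel_le {f : ℂ → ℂ} (hf : ∀ z, ‖f z‖ ≤ Real.exp |z.im|)
    {q : ℝ → ℝ} {g : ℝ → ℂ} {k : ℂ} {A N x₀ x : ℝ} (hx₀ : x₀ ∈ Icc (0:ℝ) 1)
    (hx : x ∈ Icc (0:ℝ) 1) (hA : ∀ t ∈ Icc (0:ℝ) 1, |q t| ≤ A)
    (hg : ∀ t ∈ Icc (0:ℝ) 1, ‖g t‖ ≤ N * Real.exp (|k.im| * |t - x₀|)) :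
    ‖∫ t in x₀..x, (q t : ℂ) * f (k * ((x - t : ℝ) : ℂ)) * g t‖ ≤
      A * N * Real.exp (|k.im| * |x - x₀|) := by
  have hA₀ : 0 ≤ A := (abs_nonneg _).trans (hA x₀ hx₀)
  have hN₀ : 0 ≤ N := by simpa using (norm_nonneg _).trans (hg x₀ hx₀)
  have hbound : ∀ t ∈ uIoc x₀ x, ‖(q t : ℂ) * f (k * ((x - t : ℝ) : ℂ)) * g t‖ ≤
      A * N * Real.exp (|k.im| * |x - x₀|) := by
    intro t ht
    have htI : t ∈ uIcc x₀ x := uIoc_subset_uIcc ht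
    have ht01 : t ∈ Icc (0:ℝ) 1 := uIcc_subset_Icc hx₀ hx htI
    calc ‖(q t : ℂ) * f (k * ((x - t : ℝ) : ℂ)) * g t‖
        ≤ A * Real.exp (|k.im| * |x - t|) * (N * Real.exp (|k.im| * |t - x₀|)) := by
          rw [norm_mul, norm_mul, Complex.norm_real, Real.norm_eq_abs]
          gcongr
          exacts [hA t ht01, norm_apply_mul_ofReal_le hf k _, hg t ht01]
      _ = A * N * Real.exp (|k.im| * (|x - t| + |t - x₀|)) := by
          rw [mul_add, Real.exp_add]; ring
      _ = A * N * Real.exp (|k.im| * |x - x₀|) := by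
          rw [abs_sub_add_abs_sub_of_mem_uIcc htI]
  calc _ ≤ A * N * Real.exp (|k.im| * |x - x₀|) * |x - x₀| :=
        norm_integral_le_of_norm_le_const hbound
    _ ≤ A * N * Real.exp (|k.im| * |x - x₀|) * 1 := by
        gcongr; exact Real.dist_le_of_mem_Icc_01 hx hx₀
    _ = _ := mul_one _

namespace IsSLSolution

variable {q : ℝ → ℝ} {k : ℂ} {y y' : ℝ → ℂ} {A x₀ x : ℝ}

theorem mul_eq_add_integral_sin (hq : ContinuousOn q (Icc 0 1)) (hy : IsSLSolution q (k ^ 2) y y')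
    (hx₀ : x₀ ∈ Icc (0:ℝ) 1) (hx : x ∈ Icc (0:ℝ) 1) :
    k * y x = k * y x₀ * Complex.cos (k * ((x - x₀ : ℝ) : ℂ))
      + y' x₀ * Complex.sin (k * ((x - x₀ : ℝ) : ℂ))
      + ∫ t in x₀..x, (q t : ℂ) * Complex.sin (k * ((x - t : ℝ) : ℂ)) * y t := by
  have h := wronskian_sub_eq_integral continuousOn_const hq (isSLSolution_sin_mul_sub k x) hy hx₀ hx
  simp only [sub_self, Complex.ofReal_zero, mul_zero, Complex.sin_zero, Complex.cos_zero,
    sub_zero] at h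
  linear_combination h

theorem deriv_eq_add_integral_cos (hq : ContinuousOn q (Icc 0 1))
    (hy : IsSLSolution q (k ^ 2) y y') (hx₀ : x₀ ∈ Icc (0:ℝ) 1) (hx : x ∈ Icc (0:ℝ) 1) :
    y' x = y' x₀ * Complex.cos (k * ((x - x₀ : ℝ) : ℂ))
      - k * y x₀ * Complex.sin (k * ((x - x₀ : ℝ) : ℂ))
      + ∫ t in x₀..x, (q t : ℂ) * Complex.cos (k * ((x - t : ℝ) : ℂ)) * y t := by
  have h := wronskian_sub_eq_integral continuousOn_const hq (isSLSolution_cos_mul_sub k x) hy hx₀ hx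
  simp only [sub_self, Complex.ofReal_zero, mul_zero, Complex.sin_zero, Complex.cos_zero,
    sub_zero] at h
  linear_combination h

theorem norm_mul_norm_le (hq : ContinuousOn q (Icc 0 1)) (hA : ∀ t ∈ Icc (0:ℝ) 1, |q t| ≤ A)
    (hkA : 2 * A ≤ ‖k‖) (hy : IsSLSolution q (k ^ 2) y y') (hx₀ : x₀ ∈ Icc (0:ℝ) 1) :
    ∀ x ∈ Icc (0:ℝ) 1, ‖k‖ * ‖y x‖ ≤
      2 * (‖k‖ * ‖y x₀‖ + ‖y' x₀‖) * Real.exp (|k.im| * |x - x₀|) := by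
  set w : ℝ → ℝ := fun t => Real.exp (|k.im| * |t - x₀|)
  have hw : ContinuousOn (fun t => ‖y t‖ / w t) (Icc 0 1) :=
    hy.continuousOn.norm.div (by fun_prop) fun t _ => (Real.exp_pos _).ne'
  obtain ⟨z, hz, hmax⟩ := isCompact_Icc.exists_isMaxOn (nonempty_Icc.2 zero_le_one) hw
  set N := ‖y z‖ / w z
  have hN : ∀ t ∈ Icc (0:ℝ) 1, ‖y t‖ ≤ N * w t :=
    fun t ht => (div_le_iff₀ (Real.exp_pos _)).1 (hmax ht)
  have hNz : ‖k‖ * N * w z ≤ (‖k‖ * ‖y x₀‖ + ‖y' x₀‖ + A * N) * w z := by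
    rw [mul_assoc, div_mul_cancel₀ _ (Real.exp_pos _).ne', ← norm_mul,
      mul_eq_add_integral_sin hq hy hx₀ hz]
    have hcos : ‖k * y x₀ * Complex.cos (k * ((z - x₀ : ℝ) : ℂ))‖ ≤ ‖k‖ * ‖y x₀‖ * w z := by
      rw [norm_mul, norm_mul]
      gcongr
      exact norm_apply_mul_ofReal_le Complex.norm_cos_le_exp_abs_im k _
    have hsin : ‖y' x₀ * Complex.sin (k * ((z - x₀ : ℝ) : ℂ))‖ ≤ ‖y' x₀‖ * w z := by
      rw [norm_mul]
      gcongr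
      exact norm_apply_mul_ofReal_le Complex.norm_sin_le_exp_abs_im k _
    have hint := norm_integral_mul_kernel_le Complex.norm_sin_le_exp_abs_im hx₀ hz hA hN
    linarith [norm_add₃_le (a := k * y x₀ * Complex.cos (k * ((z - x₀ : ℝ) : ℂ)))
      (b := y' x₀ * Complex.sin (k * ((z - x₀ : ℝ) : ℂ)))
      (c := ∫ t in x₀..z, (q t : ℂ) * Complex.sin (k * ((z - t : ℝ) : ℂ)) * y t)]
  have hN₀ : 0 ≤ N := div_nonneg (norm_nonneg _) (Real.exp_pos _).le
  have hkN : ‖k‖ * N ≤ 2 * (‖k‖ * ‖y x₀‖ + ‖y' x₀‖) := by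
    nlinarith [le_of_mul_le_mul_right hNz (Real.exp_pos _)]
  intro x hx
  calc ‖k‖ * ‖y x‖ ≤ ‖k‖ * N * w x := by rw [mul_assoc]; gcongr; exact hN x hx
    _ ≤ _ := by gcongr

theorem norm_mul_norm_deriv_sub_le (hq : ContinuousOn q (Icc 0 1))
    (hA : ∀ t ∈ Icc (0:ℝ) 1, |q t| ≤ A) (hkA : 2 * A ≤ ‖k‖) (hy : IsSLSolution q (k ^ 2) y y')
    (hx₀ : x₀ ∈ Icc (0:ℝ) 1) (hx : x ∈ Icc (0:ℝ) 1) :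
    ‖k‖ * ‖y' x - (y' x₀ * Complex.cos (k * ((x - x₀ : ℝ) : ℂ))
        - k * y x₀ * Complex.sin (k * ((x - x₀ : ℝ) : ℂ)))‖ ≤
      2 * A * (‖k‖ * ‖y x₀‖ + ‖y' x₀‖) * Real.exp (|k.im| * |x - x₀|) := by
  have hky : ∀ t ∈ Icc (0:ℝ) 1, ‖k * y t‖ ≤
      2 * (‖k‖ * ‖y x₀‖ + ‖y' x₀‖) * Real.exp (|k.im| * |t - x₀|) := fun t ht => by
    rw [norm_mul]; exact hy.norm_mul_norm_le hq hA hkA hx₀ t ht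
  have hint : k * ∫ t in x₀..x, (q t : ℂ) * Complex.cos (k * ((x - t : ℝ) : ℂ)) * y t =
      ∫ t in x₀..x, (q t : ℂ) * Complex.cos (k * ((x - t : ℝ) : ℂ)) * (k * y t) := by
    rw [← integral_const_mul]; congr 1; ext t; ring
  rw [deriv_eq_add_integral_cos hq hy hx₀ hx, add_sub_cancel_left, ← norm_mul, hint]
  exact (norm_integral_mul_kernel_le Complex.norm_cos_le_exp_abs_im hx₀ hx hA hky).trans_eq
    (by ring)

theorem norm_Vform_sub_le (hq : ContinuousOn q (Icc 0 1)) (hA : ∀ t ∈ Icc (0:ℝ) 1, |q t| ≤ A)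
    (hkA : 2 * A ≤ ‖k‖) (hk : k ≠ 0) (hy : IsSLSolution q (k ^ 2) y y')
    (hx₀ : x₀ ∈ Icc (0:ℝ) 1) (hinit : ‖k‖ * ‖y x₀‖ + ‖y' x₀‖ ≤ ‖k‖) {H γ1 ξ1 : ℝ}
    (hξ1 : ξ1 ∈ Icc (0:ℝ) 1) :
    ‖Vform H γ1 ξ1 y y' - (y' x₀ * Complex.cos (k * ((1 - x₀ : ℝ) : ℂ))
        - k * y x₀ * Complex.sin (k * ((1 - x₀ : ℝ) : ℂ)))‖ ≤
      (2 * A + 2 * (|H| + |γ1|)) * Real.exp |k.im| := by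
  have hk₀ : 0 < ‖k‖ := norm_pos_iff.2 hk
  have hτ : ∀ x ∈ Icc (0:ℝ) 1, |k.im| * |x - x₀| ≤ |k.im| := fun x hx =>
    mul_le_of_le_one_right (abs_nonneg _) (Real.dist_le_of_mem_Icc_01 hx hx₀)
  have hA₀ : 0 ≤ A := (abs_nonneg _).trans (hA x₀ hx₀)
  have hy1 : ∀ x ∈ Icc (0:ℝ) 1, ‖y x‖ ≤ 2 * Real.exp |k.im| := fun x hx => by
    refine le_of_mul_le_mul_left ?_ hk₀
    calc ‖k‖ * ‖y x‖ ≤ 2 * (‖k‖ * ‖y x₀‖ + ‖y' x₀‖) * Real.exp (|k.im| * |x - x₀|) :=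
          hy.norm_mul_norm_le hq hA hkA hx₀ x hx
      _ ≤ 2 * ‖k‖ * Real.exp |k.im| := by gcongr; exact hτ x hx
      _ = ‖k‖ * (2 * Real.exp |k.im|) := by ring
  set z := y' x₀ * Complex.cos (k * ((1 - x₀ : ℝ) : ℂ))
    - k * y x₀ * Complex.sin (k * ((1 - x₀ : ℝ) : ℂ))
  have hy'1 : ‖y' 1 - z‖ ≤ 2 * A * Real.exp |k.im| := by
    refine le_of_mul_le_mul_left ?_ hk₀
    calc _ ≤ 2 * A * (‖k‖ * ‖y x₀‖ + ‖y' x₀‖) * Real.exp (|k.im| * |1 - x₀|) :=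
          hy.norm_mul_norm_deriv_sub_le hq hA hkA hx₀ ⟨zero_le_one, le_rfl⟩
      _ ≤ 2 * A * ‖k‖ * Real.exp |k.im| := by gcongr; exact hτ 1 ⟨zero_le_one, le_rfl⟩
      _ = ‖k‖ * (2 * A * Real.exp |k.im|) := by ring
  rw [show Vform H γ1 ξ1 y y' - z = (y' 1 - z) + H * y 1 - γ1 * y ξ1 by simp only [Vform]; ring]
  refine (norm_sub_le_of_le (norm_add_le_of_le hy'1 (norm_ofReal_mul_le
    (hy1 1 ⟨zero_le_one, le_rfl⟩))) (norm_ofReal_mul_le (hy1 ξ1 hξ1))).trans_eq ?_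
  ring

end IsSLSolution

theorem Uform_mul_Vform_sub_Uform_mul_Vform {h H γ0 γ1 ξ0 ξ1 : ℝ} {C C' S S' : ℝ → ℂ}
    (hC0 : C 0 = 1) (hC'0 : C' 0 = 0) (hS0 : S 0 = 0) (hS'0 : S' 0 = 1) :
    Uform h γ0 ξ0 C C' * Vform H γ1 ξ1 S S' - Uform h γ0 ξ0 S S' * Vform H γ1 ξ1 C C' =
      h * Vform H γ1 ξ1 S S' - Vform H γ1 ξ1 C C'
        - γ0 * Vform H γ1 ξ1 (fun x => C ξ0 * S x - S ξ0 * C x)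
          (fun x => C ξ0 * S' x - S ξ0 * C' x) := by
  simp only [Uform, Vform, hC0, hC'0, hS0, hS'0]
  ring

theorem norm_characteristic_sub_le {h H Q γ0 γ1 K E : ℝ} {k VS VC Vθ c₀ c₁ : ℂ}
    (hVS : ‖VS - Complex.cos k‖ ≤ K * E) (hVC : ‖VC - -(k * Complex.sin k)‖ ≤ K * E)
    (hVθ : ‖Vθ - c₀‖ ≤ K * E) (hcos : ‖Complex.cos k‖ ≤ E) (hc₁ : ‖c₁‖ ≤ E) :
    ‖h * VS - VC - γ0 * Vθ - (k * Complex.sin k + ((h - H - Q : ℝ) : ℂ) * Complex.cos k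
        + γ1 * c₁ - γ0 * c₀)‖ ≤ ((|h| + 1 + |γ0|) * K + |H + Q| + |γ1|) * E := by
  rw [show (h : ℂ) * VS - VC - γ0 * Vθ - (k * Complex.sin k + ((h - H - Q : ℝ) : ℂ) * Complex.cos k
      + γ1 * c₁ - γ0 * c₀) = h * (VS - Complex.cos k) - (VC - -(k * Complex.sin k))
      - γ0 * (Vθ - c₀) + ((H + Q : ℝ) : ℂ) * Complex.cos k - γ1 * c₁ by push_cast; ring]
  refine (norm_sub_le_of_le (norm_add_le_of_le (norm_sub_le_of_le (norm_sub_le_of_le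
    (norm_ofReal_mul_le hVS) hVC) (norm_ofReal_mul_le hVθ)) (norm_ofReal_mul_le hcos))
    (norm_ofReal_mul_le hc₁)).trans_eq ?_
  ring

theorem stmt_2_general
    (q : ℝ → ℝ) (hq : ContDiffOn ℝ 1 q (Set.Icc 0 1))
    (h H γ0 γ1 : ℝ)
    (ξ0 ξ1 : ℚ) (hξ0 : (ξ0:ℝ) ∈ Set.Ioo 0 1) (hξ1 : (ξ1:ℝ) ∈ Set.Ioo 0 1)
    (C C' S S' : ℂ → ℝ → ℂ)
    (hsolC : ∀ k : ℂ, IsSLSolution q (k ^ 2) (C k) (C' k))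
    (hC0 : ∀ k : ℂ, C k 0 = 1) (hC'0 : ∀ k : ℂ, C' k 0 = 0)
    (hsolS : ∀ k : ℂ, IsSLSolution q (k ^ 2) (S k) (S' k))
    (hS0 : ∀ k : ℂ, S k 0 = 0) (hS'0 : ∀ k : ℂ, S' k 0 = 1)
    (Δ : ℂ → ℂ)
    (hΔ : ∀ k : ℂ, Δ k =
      Uform h γ0 ξ0 (C k) (C' k) * Vform H γ1 ξ1 (S k) (S' k) -
      Uform h γ0 ξ0 (S k) (S' k) * Vform H γ1 ξ1 (C k) (C' k)) :
    ∃ M R : ℝ, 0 < M ∧ 0 < R ∧ ∀ k : ℂ, R ≤ ‖k‖ →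
      ‖Δ k - (k * Complex.sin k +
          ((h - H - (1/2) * ∫ t in (0:ℝ)..1, q t : ℝ) : ℂ) * Complex.cos k +
          (γ1:ℂ) * Complex.cos (k * (ξ1:ℝ)) -
          (γ0:ℂ) * Complex.cos (k * ((1 - ξ0 : ℝ):ℂ)))‖ ≤
        M * Real.exp |k.im| := by
  have hqc : ContinuousOn q (Icc 0 1) := hq.continuousOn
  obtain ⟨A, hA⟩ := isCompact_Icc.exists_bound_of_continuousOn hqc
  simp only [Real.norm_eq_abs] at hA
  have h0 : (0:ℝ) ∈ Icc (0:ℝ) 1 := ⟨le_rfl, zero_le_one⟩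
  have hA₀ : 0 ≤ A := (abs_nonneg _).trans (hA 0 h0)
  refine ⟨(|h| + 1 + |γ0|) * (2 * A + 2 * (|H| + |γ1|)) + |H + (1/2) * ∫ t in (0:ℝ)..1, q t|
    + |γ1| + 1, max 1 (2 * A), by positivity, by positivity, fun k hk => ?_⟩
  have hk1 : 1 ≤ ‖k‖ := (le_max_left _ _).trans hk
  have hkA : 2 * A ≤ ‖k‖ := (le_max_right _ _).trans hk
  have hk : k ≠ 0 := norm_pos_iff.1 (one_pos.trans_le hk1)
  have hξ0' := Ioo_subset_Icc_self hξ0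
  have hξ1' := Ioo_subset_Icc_self hξ1
  have hVS := (hsolS k).norm_Vform_sub_le hqc hA hkA hk h0 (by simpa [hS0, hS'0] using hk1)
    (H := H) (γ1 := γ1) hξ1'
  have hVC := (hsolC k).norm_Vform_sub_le hqc hA hkA hk h0 (by simp [hC0, hC'0])
    (H := H) (γ1 := γ1) hξ1'
  have hθ0 : C k ξ0 * S k ξ0 - S k ξ0 * C k ξ0 = 0 := by ring
  have hθ'0 := (hsolC k).wronskian_eq_one hqc (hsolS k) (hC0 k) (hC'0 k) (hS0 k) (hS'0 k) hξ0'
  have hVθ := ((hsolS k).const_mul_sub_const_mul (hsolC k) (C k ξ0) (S k ξ0)).norm_Vform_sub_le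
    hqc hA hkA hk hξ0' (by simpa [hθ0, hθ'0] using hk1) (H := H) (γ1 := γ1) hξ1'
  simp only [hS0, hS'0, hC0, hC'0, hθ0, hθ'0, sub_zero, Complex.ofReal_one, mul_one, mul_zero,
    zero_mul, one_mul, zero_sub] at hVS hVC hVθ
  rw [hΔ, Uform_mul_Vform_sub_Uform_mul_Vform (hC0 k) (hC'0 k) (hS0 k) (hS'0 k)]
  refine (norm_characteristic_sub_le hVS hVC hVθ (Complex.norm_cos_le_exp_abs_im k)
    (norm_cos_mul_ofReal_le hξ1' k)).trans
    (mul_le_mul_of_nonneg_right (by linarith) (Real.exp_pos _).le)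

/-- Asymptotics of the characteristic function `Δ(λ) = U(C)V(S) - U(S)V(C)` of the problem
`L(q,h,H,γ₀,γ₁,ξ₀,ξ₁)` with `h, H ∈ ℝ`:
`Δ(λ) = k sin k + w cos k + γ₁ cos(kξ₁) - γ₀ cos(k(1-ξ₀)) + O(e^{|Im k|})` as `|k| → ∞`,
where `λ = k²` and `w = h - H - Q(1)`. -/
theorem stmt_2
    (q : ℝ → ℝ) (hq : ContDiffOn ℝ 1 q (Set.Icc 0 1))
    (h H γ0 γ1 : ℝ) (hγ0 : γ0 ≠ 0) (hγ1 : γ1 ≠ 0)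
    (ξ0 ξ1 : ℚ) (hξ0 : (ξ0:ℝ) ∈ Set.Ioo 0 1) (hξ1 : (ξ1:ℝ) ∈ Set.Ioo 0 1)
    (C C' S S' : ℂ → ℝ → ℂ)
    (hsolC : ∀ k : ℂ, IsSLSolution q (k ^ 2) (C k) (C' k))
    (hC0 : ∀ k : ℂ, C k 0 = 1) (hC'0 : ∀ k : ℂ, C' k 0 = 0)
    (hsolS : ∀ k : ℂ, IsSLSolution q (k ^ 2) (S k) (S' k))
    (hS0 : ∀ k : ℂ, S k 0 = 0) (hS'0 : ∀ k : ℂ, S' k 0 = 1)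
    (Δ : ℂ → ℂ)
    (hΔ : ∀ k : ℂ, Δ k =
      Uform h γ0 ξ0 (C k) (C' k) * Vform H γ1 ξ1 (S k) (S' k) -
      Uform h γ0 ξ0 (S k) (S' k) * Vform H γ1 ξ1 (C k) (C' k)) :
    ∃ M R : ℝ, 0 < M ∧ 0 < R ∧ ∀ k : ℂ, R ≤ ‖k‖ →
      ‖Δ k - (k * Complex.sin k +
          ((h - H - (1/2) * ∫ t in (0:ℝ)..1, q t : ℝ) : ℂ) * Complex.cos k +
          (γ1:ℂ) * Complex.cos (k * (ξ1:ℝ)) -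
          (γ0:ℂ) * Complex.cos (k * ((1 - ξ0 : ℝ):ℂ)))‖ ≤
        M * Real.exp |k.im| :=
  stmt_2_general q hq h H γ0 γ1 ξ0 ξ1 hξ0 hξ1 C C' S S' hsolC hC0 hC'0 hsolS hS0 hS'0 Δ hΔ
end
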